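/- arXiv:2204.00085 — 4 statements merged into one kernel-verified Lean document; each statement's English description precedes it below -/
import Mathlib

section
/- Let Z⁺ : ℝ² → ℝ² be a locally Lipschitz vector field satisfying Z⁺(x,y) = (−y + o(‖(x,y)‖), x + o(‖(x,y)‖)) as (x,y) → (0,0), and define Z⁻(x,y) := (−Z⁺₁(x,−y), Z⁺₂(x,−y)) (so that the piecewise system Z given by Z⁺ on {y>0} and Z⁻ on {y<0} is invariant under the reversibility (x,y,t) ↦ (x,−y,−t)). Then the origin is a crossing center of Z. -/
open Asymptotics

/-- A crossing periodic orbit of the piecewise system given by `Zp` on `{h > 0}`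
and `Zm` on `{h < 0}`, with separation line `{h = 0}`. -/
structure IsCrossingPeriodicOrbit (Zp Zm : ℝ × ℝ → ℝ × ℝ) (h : ℝ × ℝ → ℝ)
    (γ : ℝ → ℝ × ℝ) (T : ℝ) : Prop where
  T_pos : 0 < T
  periodic : Function.Periodic γ T
  continuous : Continuous γ
  nonconst : ∃ t s, γ t ≠ γ s
  derivPlus : ∀ t, 0 < h (γ t) → HasDerivAt γ (Zp (γ t)) t
  derivMinus : ∀ t, h (γ t) < 0 → HasDerivAt γ (Zm (γ t)) t
  finiteCross : {t ∈ Set.Ico (0 : ℝ) T | h (γ t) = 0}.Finite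

/-- The origin is a crossing center: every small enough nonzero point of the
separation line `{h = 0}` lies on a crossing periodic orbit. -/
def IsCrossingCenter (Zp Zm : ℝ × ℝ → ℝ × ℝ) (h : ℝ × ℝ → ℝ) : Prop :=
  ∃ ε > (0 : ℝ), ∀ p : ℝ × ℝ, h p = 0 → 0 < ‖p‖ → ‖p‖ < ε →
    ∃ γ T, IsCrossingPeriodicOrbit Zp Zm h γ T ∧ p ∈ Set.range γ


/-!
Near the origin `Z⁺` is a small perturbation of the rotation `(x, y) ↦ (-y, x)`, so by Grönwall
its solution through `(a, 0)`, `a > 0`, follows the circle of radius `a` until it returns to the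
negative x-axis, staying in the upper half-plane meanwhile. By reversibility, the mirror image of
this arc in the x-axis, run backwards, solves `Z⁻`, and the two arcs close up into a crossing
periodic orbit. A point `(a, 0)` with `a < 0` is the endpoint of such an arc: run the same argument
for the field conjugated by `(x, y) ↦ (-x, y)` and reverse time.
-/

open Set Filter Topology Real
open scoped NNReal

section ODE

variable {E : Type*} [NormedAddCommGroup E] [NormedSpace ℝ E]

theorem exists_hasDerivWithinAt_Icc_of_lipschitzWith [CompleteSpace E] {V : E → E} {K B : ℝ≥0}
    (hV : LipschitzWith K V) (hB : ∀ x, ‖V x‖ ≤ B) (x₀ : E) {T : ℝ} (hT : 0 ≤ T) :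
    ∃ f : ℝ → E, f 0 = x₀ ∧ ∀ t ∈ Icc 0 T, HasDerivWithinAt f (V (f t)) (Icc 0 T) t := by
  have hPL : IsPicardLindelof (fun _ ↦ V) (tmin := 0) (tmax := T) ⟨0, le_rfl, hT⟩ x₀
      (B * T.toNNReal) 0 B K :=
    .of_time_independent (fun x _ ↦ hB x) hV.lipschitzOnWith (by simp [hT])
  exact hPL.exists_eq_forall_mem_Icc_hasDerivWithinAt₀

theorem norm_le_mul_exp_of_hasDerivWithinAt {f : ℝ → E} {V : E → E} {K T : ℝ}
    (hf : ∀ t ∈ Icc 0 T, HasDerivWithinAt f (V (f t)) (Icc 0 T) t)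
    (hV : ∀ x, ‖V x‖ ≤ K * ‖x‖) (t : ℝ) (ht : t ∈ Icc 0 T) :
    ‖f t‖ ≤ ‖f 0‖ * exp (K * t) := by
  have := norm_le_gronwallBound_of_norm_deriv_right_le (ε := 0)
    (fun t ht ↦ (hf t ht).continuousWithinAt)
    (fun t ht ↦ (hf t (Ico_subset_Icc_self ht)).mono_of_mem_nhdsWithin (Icc_mem_nhdsGE_of_mem ht))
    le_rfl (fun t _ ↦ by simpa using hV (f t)) t ht
  simpa [gronwallBound_ε0] using this

end ODE

/-- The square `[-r, r]²` is the closed `r`-ball of the sup norm on `ℝ × ℝ`. -/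
def clampSquare (r : ℝ) (q : ℝ × ℝ) : ℝ × ℝ := (max (-r) (min r q.1), max (-r) (min r q.2))

section clampSquare

variable {r : ℝ}

theorem lipschitzWith_clampSquare : LipschitzWith 1 (clampSquare r) := by
  have h := ((LipschitzWith.const_min LipschitzWith.prod_fst r).const_max (-r)).prodMk
    ((LipschitzWith.const_min LipschitzWith.prod_snd r).const_max (-r))
  rwa [max_self] at h

theorem clampSquare_of_norm_le {q : ℝ × ℝ} (hq : ‖q‖ ≤ r) : clampSquare r q = q := by
  rw [norm_prod_le_iff, Real.norm_eq_abs, Real.norm_eq_abs, abs_le, abs_le] at hq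
  ext <;> simp [clampSquare, hq]

theorem norm_clampSquare_le (hr : 0 ≤ r) (q : ℝ × ℝ) : ‖clampSquare r q‖ ≤ min r ‖q‖ := by
  have key : ∀ x : ℝ, |max (-r) (min r x)| ≤ min r |x| := fun x ↦ by
    simp only [abs_le, le_min_iff]; constructor <;> constructor <;> cases abs_cases x <;>
      simp only [max_le_iff, le_max_iff, min_le_iff, le_min_iff] <;> grind
  simp only [clampSquare, Prod.norm_def, Real.norm_eq_abs, max_le_iff, le_min_iff]
  grind [key q.1, key q.2]

end clampSquare

def flipFst : ℝ × ℝ →L[ℝ] ℝ × ℝ := (-ContinuousLinearMap.id ℝ ℝ).prodMap (.id ℝ ℝ)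

def flipSnd : ℝ × ℝ →L[ℝ] ℝ × ℝ := (ContinuousLinearMap.id ℝ ℝ).prodMap (-.id ℝ ℝ)

@[simp] theorem flipFst_apply (q : ℝ × ℝ) : flipFst q = (-q.1, q.2) := rfl

@[simp] theorem flipSnd_apply (q : ℝ × ℝ) : flipSnd q = (q.1, -q.2) := rfl

@[simp] theorem norm_flipFst (q : ℝ × ℝ) : ‖flipFst q‖ = ‖q‖ := by simp [Prod.norm_def]

theorem lipschitzWith_rotation : LipschitzWith 1 fun q : ℝ × ℝ ↦ ((-q.2, q.1) : ℝ × ℝ) :=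
  LipschitzWith.of_dist_le_mul fun p q ↦ by
    simp [Prod.dist_eq, Real.dist_eq, ← abs_neg (p.2 - q.2), max_comm]

def IsNearRotationOn (W : ℝ × ℝ → ℝ × ℝ) (δ r : ℝ) : Prop :=
  ∀ q : ℝ × ℝ, ‖q‖ ≤ r → ‖W q - (-q.2, q.1)‖ ≤ δ * ‖q‖

theorem Asymptotics.IsLittleO.exists_isNearRotationOn {W : ℝ × ℝ → ℝ × ℝ}
    (hW : (fun q : ℝ × ℝ ↦ W q - (-q.2, q.1)) =o[𝓝 0] fun q ↦ ‖q‖) {δ : ℝ} (hδ : 0 < δ) :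
    ∃ r > 0, IsNearRotationOn W δ r := by
  obtain ⟨ε, hε, hball⟩ := Metric.eventually_nhds_iff.mp (hW.def hδ)
  refine ⟨ε / 2, half_pos hε, fun q hq ↦ ?_⟩
  simpa using hball (y := q) (by rw [dist_zero_right]; linarith)

namespace IsNearRotationOn

variable {W : ℝ × ℝ → ℝ × ℝ} {δ r : ℝ}

theorem norm_le (hW : IsNearRotationOn W δ r) (hδ : δ ≤ 1) {q : ℝ × ℝ} (hq : ‖q‖ ≤ r) :
    ‖W q‖ ≤ 2 * ‖q‖ :=
  calc ‖W q‖ ≤ ‖W q - (-q.2, q.1)‖ + ‖((-q.2, q.1) : ℝ × ℝ)‖ := norm_le_norm_sub_add _ _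
    _ ≤ δ * ‖q‖ + ‖q‖ := by gcongr; exacts [hW q hq, by simp [Prod.norm_def, max_comm]]
    _ ≤ 2 * ‖q‖ := by nlinarith [norm_nonneg q]

/-- The rotation field is invariant under `V ↦ -flipFst ∘ V ∘ flipFst`. -/
theorem conj_flipFst (hW : IsNearRotationOn W δ r) :
    IsNearRotationOn (fun q ↦ -flipFst (W (flipFst q))) δ r := fun q hq ↦ by
  have h := hW (flipFst q) (by rwa [norm_flipFst])
  have hJ : -flipFst (W (flipFst q)) - (-q.2, q.1) =
      -flipFst (W (flipFst q) - (-(flipFst q).2, (flipFst q).1)) := by ext <;> simp; ring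
  rw [hJ, norm_neg, norm_flipFst, ← norm_flipFst q]
  exact h

end IsNearRotationOn

section PeriodicExtension

variable {E : Type*} {P : ℝ} [Fact (0 < P)] {g : ℝ → E} {t : ℝ}

noncomputable def periodicExtension (P : ℝ) [Fact (0 < P)] (g : ℝ → E) (t : ℝ) : E :=
  AddCircle.liftIco P 0 g t

theorem periodic_periodicExtension : Function.Periodic (periodicExtension P g) P := fun t ↦ by
  simp [periodicExtension]

theorem periodicExtension_of_mem_Ico (ht : t ∈ Ico 0 P) : periodicExtension P g t = g t :=
  AddCircle.liftIco_zero_coe_apply ht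

theorem periodicExtension_of_sub_zsmul_mem_Ico {k : ℤ} (ht : t - k • P ∈ Ico 0 P) :
    periodicExtension P g t = g (t - k • P) := by
  rw [← periodicExtension_of_mem_Ico (g := g) ht, periodic_periodicExtension.sub_zsmul_eq]

theorem continuous_periodicExtension [TopologicalSpace E] (h : g 0 = g P)
    (hg : ContinuousOn g (Icc 0 P)) : Continuous (periodicExtension P g) :=
  (AddCircle.liftIco_zero_continuous h hg).comp (AddCircle.continuous_mk' P)

theorem hasDerivAt_periodicExtension [NormedAddCommGroup E] [NormedSpace ℝ E] {v : E} {k : ℤ}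
    (ht : t - k • P ∈ Ioo 0 P) (hg : HasDerivAt g v (t - k • P)) :
    HasDerivAt (periodicExtension P g) v t := by
  have hs : HasDerivAt (periodicExtension P g) v (t - k • P) := by
    refine hg.congr_of_eventuallyEq ?_
    filter_upwards [Ioo_mem_nhds ht.1 ht.2] with x hx
    exact periodicExtension_of_mem_Ico (Ioo_subset_Ico_self hx)
  simpa only [periodic_periodicExtension.sub_zsmul_eq] using hs.comp_sub_const t _

end PeriodicExtension

structure IsUpperArc (V : ℝ × ℝ → ℝ × ℝ) (u : ℝ → ℝ × ℝ) (τ : ℝ) : Prop where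
  pos : 0 < τ
  continuousOn : ContinuousOn u (Icc 0 τ)
  hasDerivAt : ∀ t ∈ Ioo 0 τ, HasDerivAt u (V (u t)) t
  start_snd : (u 0).2 = 0
  start_fst_pos : 0 < (u 0).1
  end_snd : (u τ).2 = 0
  end_fst_neg : (u τ).1 < 0
  snd_pos : ∀ t ∈ Ioo 0 τ, 0 < (u t).2

namespace IsUpperArc

variable {W : ℝ × ℝ → ℝ × ℝ} {w : ℝ → ℝ × ℝ} {τ : ℝ}

theorem reverse (hw : IsUpperArc W w τ) :
    IsUpperArc (fun q ↦ -flipFst (W (flipFst q))) (fun t ↦ flipFst (w (τ - t))) τ where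
  pos := hw.pos
  continuousOn := flipFst.continuous.comp_continuousOn <|
    hw.continuousOn.comp (by fun_prop) fun t ht ↦ ⟨by linarith [ht.2], by linarith [ht.1]⟩
  hasDerivAt t ht := by
    have h := hw.hasDerivAt (τ - t) ⟨by linarith [ht.2], by linarith [ht.1]⟩
    simpa [Function.comp_def] using flipFst.hasFDerivAt.comp_hasDerivAt t (h.comp_const_sub τ t)
  start_snd := by simpa using hw.end_snd
  start_fst_pos := by simpa using hw.end_fst_neg
  end_snd := by simpa using hw.start_snd
  end_fst_neg := by simpa using hw.start_fst_pos
  snd_pos t ht := by simpa using hw.snd_pos (τ - t) ⟨by linarith [ht.2], by linarith [ht.1]⟩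

end IsUpperArc

noncomputable def mirrorLoop (u : ℝ → ℝ × ℝ) (τ t : ℝ) : ℝ × ℝ :=
  if t ≤ τ then u t else flipSnd (u (2 * τ - t))

section mirrorLoop

variable {u : ℝ → ℝ × ℝ} {τ s : ℝ}

theorem mirrorLoop_of_le (hs : s ≤ τ) : mirrorLoop u τ s = u s := if_pos hs

theorem mirrorLoop_of_lt (hs : τ < s) : mirrorLoop u τ s = flipSnd (u (2 * τ - s)) :=
  if_neg hs.not_ge

end mirrorLoop

namespace IsUpperArc

variable {V Zm : ℝ × ℝ → ℝ × ℝ} {u : ℝ → ℝ × ℝ} {τ s : ℝ}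

theorem mirrorLoop_two_mul (hu : IsUpperArc V u τ) : mirrorLoop u τ (2 * τ) = u 0 := by
  rw [mirrorLoop_of_lt (by linarith [hu.pos]), sub_self]
  ext <;> simp [hu.start_snd]

theorem continuousOn_mirrorLoop (hu : IsUpperArc V u τ) :
    ContinuousOn (mirrorLoop u τ) (Icc 0 (2 * τ)) := by
  refine ContinuousOn.if (fun t ht ↦ ?_) (hu.continuousOn.mono fun t ht ↦ ?_) ?_
  · obtain rfl : t = τ := by simpa [Iic_def, frontier_Iic] using ht.2
    rw [two_mul, add_sub_cancel_right]
    ext <;> simp [hu.end_snd]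
  · rw [Iic_def, closure_Iic] at ht
    exact ⟨ht.1.1, ht.2⟩
  · simp only [not_le, Ioi_def, closure_Ioi]
    refine flipSnd.continuous.comp_continuousOn <| hu.continuousOn.comp (by fun_prop) ?_
    exact fun t ht ↦ ⟨by linarith [ht.1.2], by linarith [mem_Ici.mp ht.2]⟩

theorem mirrorLoop_snd_pos (hu : IsUpperArc V u τ) (hs : s ∈ Ioo 0 τ) :
    0 < (mirrorLoop u τ s).2 := by
  rw [mirrorLoop_of_le hs.2.le]
  exact hu.snd_pos s hs

theorem mirrorLoop_snd_neg (hu : IsUpperArc V u τ) (hs : s ∈ Ioo τ (2 * τ)) :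
    (mirrorLoop u τ s).2 < 0 := by
  rw [mirrorLoop_of_lt hs.1]
  simpa using hu.snd_pos (2 * τ - s) ⟨by linarith [hs.2], by linarith [hs.1]⟩

theorem hasDerivAt_mirrorLoop_of_lt (hu : IsUpperArc V u τ) (hs : s ∈ Ioo 0 τ) :
    HasDerivAt (mirrorLoop u τ) (V (mirrorLoop u τ s)) s := by
  rw [mirrorLoop_of_le hs.2.le]
  refine (hu.hasDerivAt s hs).congr_of_eventuallyEq ?_
  filter_upwards [Iio_mem_nhds hs.2] with t ht using mirrorLoop_of_le ht.le

theorem hasDerivAt_mirrorLoop_of_gt (hu : IsUpperArc V u τ)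
    (hrev : ∀ p, Zm p = -flipSnd (V (flipSnd p))) (hs : s ∈ Ioo τ (2 * τ)) :
    HasDerivAt (mirrorLoop u τ) (Zm (mirrorLoop u τ s)) s := by
  have h := hu.hasDerivAt (2 * τ - s) ⟨by linarith [hs.2], by linarith [hs.1]⟩
  rw [mirrorLoop_of_lt hs.1, hrev]
  have h' := flipSnd.hasFDerivAt.comp_hasDerivAt s (h.comp_const_sub (2 * τ) s)
  refine (h'.congr_of_eventuallyEq ?_).congr_deriv (by simp)
  filter_upwards [Ioi_mem_nhds hs.1] with t ht using mirrorLoop_of_lt ht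

theorem mirrorLoop_snd_cases (hu : IsUpperArc V u τ) (hs : s ∈ Ico 0 (2 * τ)) :
    (s ∈ Ioo 0 τ ∧ 0 < (mirrorLoop u τ s).2) ∨ (s ∈ Ioo τ (2 * τ) ∧ (mirrorLoop u τ s).2 < 0) ∨
      ((s = 0 ∨ s = τ) ∧ (mirrorLoop u τ s).2 = 0) := by
  obtain rfl | h0 := hs.1.eq_or_lt
  · exact .inr <| .inr ⟨.inl rfl, by rw [mirrorLoop_of_le hu.pos.le]; exact hu.start_snd⟩
  obtain h1 | rfl | h1 := lt_trichotomy s τ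
  · exact .inl ⟨⟨h0, h1⟩, hu.mirrorLoop_snd_pos ⟨h0, h1⟩⟩
  · exact .inr <| .inr ⟨.inr rfl, by rw [mirrorLoop_of_le le_rfl]; exact hu.end_snd⟩
  · exact .inr <| .inl ⟨⟨h1, hs.2⟩, hu.mirrorLoop_snd_neg ⟨h1, hs.2⟩⟩

theorem exists_isCrossingPeriodicOrbit {Zp : ℝ × ℝ → ℝ × ℝ} (hu : IsUpperArc Zp u τ)
    (hrev : ∀ p, Zm p = -flipSnd (Zp (flipSnd p))) :
    ∃ γ T, IsCrossingPeriodicOrbit Zp Zm (fun p ↦ p.2) γ T ∧ u '' Icc 0 τ ⊆ range γ := by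
  have hP : 0 < 2 * τ := by linarith [hu.pos]
  have : Fact (0 < 2 * τ) := ⟨hP⟩
  have hshift (t : ℝ) : ∃ k : ℤ, t - k • (2 * τ) ∈ Ico 0 (2 * τ) :=
    ⟨toIcoDiv hP 0 t, by simpa [self_sub_toIcoDiv_zsmul] using toIcoMod_mem_Ico hP 0 t⟩
  have hγu {t : ℝ} (ht : t ∈ Icc 0 τ) : periodicExtension (2 * τ) (mirrorLoop u τ) t = u t := by
    rw [periodicExtension_of_mem_Ico ⟨ht.1, by linarith [ht.2]⟩, mirrorLoop_of_le ht.2]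
  refine ⟨periodicExtension (2 * τ) (mirrorLoop u τ), 2 * τ, ⟨hP, periodic_periodicExtension,
    continuous_periodicExtension ?_ hu.continuousOn_mirrorLoop, ⟨0, τ, ?_⟩, fun t ht ↦ ?_,
    fun t ht ↦ ?_, ?_⟩, ?_⟩
  · rw [mirrorLoop_two_mul hu, mirrorLoop_of_le hu.pos.le]
  · rw [hγu ⟨le_rfl, hu.pos.le⟩, hγu ⟨hu.pos.le, le_rfl⟩]
    exact fun h ↦ (hu.start_fst_pos.trans (h ▸ hu.end_fst_neg)).false
  · obtain ⟨k, hk⟩ := hshift t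
    rw [periodicExtension_of_sub_zsmul_mem_Ico hk] at ht ⊢
    obtain ⟨hs, -⟩ | ⟨-, h⟩ | ⟨-, h⟩ := hu.mirrorLoop_snd_cases hk
    · exact hasDerivAt_periodicExtension ⟨hs.1, by linarith [hs.2]⟩
        (hu.hasDerivAt_mirrorLoop_of_lt hs)
    all_goals linarith
  · obtain ⟨k, hk⟩ := hshift t
    rw [periodicExtension_of_sub_zsmul_mem_Ico hk] at ht ⊢
    obtain ⟨-, h⟩ | ⟨hs, -⟩ | ⟨-, h⟩ := hu.mirrorLoop_snd_cases hk
    · linarith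
    · exact hasDerivAt_periodicExtension ⟨by linarith [hs.1], hs.2⟩
        (hu.hasDerivAt_mirrorLoop_of_gt hrev hs)
    · linarith
  · refine ({0, τ} : Set ℝ).toFinite.subset fun t ⟨ht, h0⟩ ↦ ?_
    rw [periodicExtension_of_mem_Ico ht] at h0
    obtain ⟨-, h⟩ | ⟨-, h⟩ | ⟨hs, -⟩ := hu.mirrorLoop_snd_cases ht
    · linarith
    · linarith
    · exact hs
  · rintro _ ⟨t, ht, rfl⟩
    exact ⟨t, hγu ht⟩

end IsUpperArc

namespace Real

theorem exp_le_three_pow (n : ℕ) : exp n ≤ 3 ^ n := by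
  rw [← exp_one_pow]
  exact pow_le_pow_left₀ (exp_pos 1).le (exp_one_lt_d9.trans (by norm_num)).le n

theorem one_half_le_cos_of_abs_le {x : ℝ} (hx : |x| ≤ π / 3) : 1 / 2 ≤ cos x := by
  rw [← cos_abs, ← cos_pi_div_three]
  exact cos_le_cos_of_nonneg_of_le_pi (abs_nonneg x) (by linarith [pi_pos]) hx

theorem cos_le_neg_one_half_of_abs_sub_pi_le {x : ℝ} (hx : |x - π| ≤ π / 3) :
    cos x ≤ -(1 / 2) := by
  linarith [one_half_le_cos_of_abs_le hx, cos_sub_pi x]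

theorem one_half_le_sin_of_abs_sub_pi_div_two_le {x : ℝ} (hx : |x - π / 2| ≤ π / 3) :
    1 / 2 ≤ sin x := by
  simpa [cos_sub_pi_div_two] using one_half_le_cos_of_abs_le hx

end Real

/-- The height rises while `cos ≥ 1/2`, is positive while `sin ≥ 1/2`, and falls while
`cos ≤ -1/2`. -/
theorem exists_first_return {f : ℝ → ℝ × ℝ} {y' : ℝ → ℝ} {a : ℝ} (ha : 0 < a)
    (hf : ContinuousOn f (Icc 0 (4 * π / 3)))
    (hy : ∀ t ∈ Ioo 0 (4 * π / 3), HasDerivAt (fun s ↦ (f s).2) (y' t) t)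
    (hy' : ∀ t ∈ Ioo 0 (4 * π / 3), |y' t - a * cos t| ≤ a / 4)
    (hfc : ∀ t ∈ Icc 0 (4 * π / 3), ‖f t - (a * cos t, a * sin t)‖ ≤ a / 4)
    (h0 : (f 0).2 = 0) :
    ∃ τ ∈ Ioo 0 (4 * π / 3), (f τ).2 = 0 ∧ (f τ).1 < 0 ∧ ∀ t ∈ Ioo 0 τ, 0 < (f t).2 := by
  have hπ := pi_pos
  have hfst t (ht : t ∈ Icc 0 (4 * π / 3)) : |(f t).1 - a * cos t| ≤ a / 4 := by
    simpa using (norm_fst_le _).trans (hfc t ht)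
  have hsnd t (ht : t ∈ Icc 0 (4 * π / 3)) : |(f t).2 - a * sin t| ≤ a / 4 := by
    simpa using (norm_snd_le _).trans (hfc t ht)
  have hcont : ContinuousOn (fun s ↦ (f s).2) (Icc 0 (4 * π / 3)) :=
    continuous_snd.comp_continuousOn hf
  have hrise : StrictMonoOn (fun s ↦ (f s).2) (Icc 0 (π / 3)) := by
    refine strictMonoOn_of_hasDerivWithinAt_pos (convex_Icc _ _)
      (hcont.mono (Icc_subset_Icc_right (by linarith)))
      (fun t ht ↦ (hy t ⟨by simp_all, by simp at ht; linarith⟩).hasDerivWithinAt) fun t ht ↦ ?_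
    rw [interior_Icc] at ht
    have hcos := Real.one_half_le_cos_of_abs_le (abs_le.2 ⟨by linarith [ht.1], ht.2.le⟩)
    have := abs_le.1 (hy' t ⟨ht.1, by linarith [ht.2]⟩)
    nlinarith
  have hfall : StrictAntiOn (fun s ↦ (f s).2) (Icc (2 * π / 3) (4 * π / 3)) := by
    refine strictAntiOn_of_hasDerivWithinAt_neg (convex_Icc _ _)
      (hcont.mono (Icc_subset_Icc_left (by linarith)))
      (fun t ht ↦ (hy t ⟨by simp at ht; linarith, by simp_all⟩).hasDerivWithinAt) fun t ht ↦ ?_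
    rw [interior_Icc] at ht
    have hcos := Real.cos_le_neg_one_half_of_abs_sub_pi_le (x := t)
      (abs_le.2 ⟨by linarith [ht.1], by linarith [ht.2]⟩)
    have := abs_le.1 (hy' t ⟨by linarith [ht.1], ht.2⟩)
    nlinarith
  have hmid : ∀ t ∈ Icc (π / 3) (2 * π / 3), 0 < (f t).2 := fun t ht ↦ by
    have hsin := Real.one_half_le_sin_of_abs_sub_pi_div_two_le (x := t)
      (abs_le.2 ⟨by linarith [ht.1], by linarith [ht.2]⟩)
    have := abs_le.1 (hsnd t ⟨by linarith [ht.1], by linarith [ht.2]⟩)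
    nlinarith
  have hend : (f (4 * π / 3)).2 < 0 := by
    have hsin : sin (4 * π / 3) = -sin (π / 3) := by
      rw [← Real.sin_add_pi]; ring_nf
    have := Real.one_half_le_sin_of_abs_sub_pi_div_two_le (x := π / 3)
      (abs_le.2 ⟨by linarith, by linarith⟩)
    have := abs_le.1 (hsnd _ ⟨by linarith, le_rfl⟩)
    nlinarith
  obtain ⟨τ, hτ, hτ0⟩ := intermediate_value_Icc' (by linarith : 2 * π / 3 ≤ 4 * π / 3)
    (hcont.mono (Icc_subset_Icc_left (by linarith))) ⟨hend.le, (hmid _ ⟨by linarith, le_rfl⟩).le⟩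
  have hτ₁ : 2 * π / 3 < τ :=
    hτ.1.lt_of_ne (by rintro rfl; exact (hmid _ ⟨by linarith, le_rfl⟩).ne' hτ0)
  have hτ₂ : τ < 4 * π / 3 := hτ.2.lt_of_ne (by rintro rfl; exact hend.ne hτ0)
  refine ⟨τ, ⟨by linarith, hτ₂⟩, hτ0, ?_, fun t ht ↦ ?_⟩
  · have hcos := Real.cos_le_neg_one_half_of_abs_sub_pi_le (x := τ)
      (abs_le.2 ⟨by linarith, by linarith⟩)
    have := abs_le.1 (hfst τ ⟨by linarith, hτ₂.le⟩)
    nlinarith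
  obtain h | h := le_or_gt t (π / 3)
  · simpa [h0] using hrise ⟨le_rfl, by linarith⟩ ⟨ht.1.le, h⟩ ht.1
  obtain h' | h' := le_or_gt t (2 * π / 3)
  · exact hmid t ⟨h.le, h'⟩
  · simpa [hτ0] using hfall ⟨h'.le, by linarith [ht.2]⟩ ⟨hτ₁.le, hτ₂.le⟩ ht.2

namespace IsNearRotationOn

variable {W : ℝ × ℝ → ℝ × ℝ} {δ r a : ℝ}

/-- The field is only controlled on the ball of radius `r`, so the solution is first built for
the globally Lipschitz and bounded field `W ∘ clampSquare r`; the growth bound `exp (2 t)` then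
keeps it inside that ball. -/
theorem exists_solution (hW : LocallyLipschitz W) (hnear : IsNearRotationOn W δ r) (hδ : δ ≤ 1)
    (ha : 0 ≤ a) (har : 3 ^ 10 * a ≤ r) :
    ∃ f : ℝ → ℝ × ℝ, f 0 = (a, 0) ∧
      ∀ t ∈ Icc 0 5, HasDerivWithinAt f (W (f t)) (Icc 0 5) t ∧ ‖f t‖ ≤ 3 ^ 10 * a := by
  have hr : 0 ≤ r := le_trans (by positivity) har
  have hclamp q : ‖clampSquare r q‖ ≤ min r ‖q‖ := norm_clampSquare_le hr q
  obtain ⟨K, hK⟩ := hW.locallyLipschitzOn.exists_lipschitzOnWith_of_compact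
    (isCompact_closedBall (0 : ℝ × ℝ) r)
  have hV : LipschitzWith (K * 1) (W ∘ clampSquare r) := lipschitzOnWith_univ.1 <|
    hK.comp lipschitzWith_clampSquare.lipschitzOnWith fun q _ ↦
      mem_closedBall_zero_iff.2 ((hclamp q).trans (min_le_left _ _))
  have hVnorm q : ‖W (clampSquare r q)‖ ≤ 2 * min r ‖q‖ :=
    (hnear.norm_le hδ ((hclamp q).trans (min_le_left _ _))).trans (by gcongr; exact hclamp q)
  obtain ⟨f, hf0, hf⟩ := exists_hasDerivWithinAt_Icc_of_lipschitzWith hV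
    (B := (2 * r).toNNReal) (fun q ↦ (hVnorm q).trans <| by
      rw [Real.coe_toNNReal _ (by positivity)]; gcongr; exact min_le_left _ _)
    (a, 0) (by norm_num : (0 : ℝ) ≤ 5)
  have hfa t (ht : t ∈ Icc 0 5) : ‖f t‖ ≤ 3 ^ 10 * a :=
    calc ‖f t‖ ≤ ‖f 0‖ * exp (2 * t) := norm_le_mul_exp_of_hasDerivWithinAt hf
          (fun q ↦ (hVnorm q).trans (by gcongr; exact min_le_right _ _)) t ht
      _ ≤ a * exp ((10 : ℕ) : ℝ) := by
          rw [hf0, show ‖((a, 0) : ℝ × ℝ)‖ = a by simp [Prod.norm_def, ha]]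
          exact mul_le_mul_of_nonneg_left (exp_le_exp.2 (by push_cast; linarith [ht.2])) ha
      _ ≤ 3 ^ 10 * a := by rw [mul_comm]; gcongr; exact Real.exp_le_three_pow 10
  refine ⟨f, hf0, fun t ht ↦ ⟨?_, hfa t ht⟩⟩
  simpa [clampSquare_of_norm_le ((hfa t ht).trans har)] using hf t ht

/-- `f` is a `δ M`-approximate solution of the rotation field, whose exact solution through
`(a, 0)` is the circle. -/
theorem norm_sub_circle_le (hnear : IsNearRotationOn W δ r) {f : ℝ → ℝ × ℝ} {T M : ℝ}
    (hf : ∀ t ∈ Icc 0 T, HasDerivWithinAt f (W (f t)) (Icc 0 T) t)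
    (hfM : ∀ t ∈ Icc 0 T, ‖f t‖ ≤ M) (hMr : M ≤ r) (hδ : 0 ≤ δ) (hf0 : f 0 = (a, 0)) (t : ℝ)
    (ht : t ∈ Icc 0 T) : ‖f t - (a * cos t, a * sin t)‖ ≤ δ * M * (exp t - 1) := by
  have hcircle (t : ℝ) : HasDerivAt (fun t ↦ (a * cos t, a * sin t))
      (-(a * sin t), a * cos t) t := by
    simpa using ((hasDerivAt_cos t).const_mul a).prodMk ((hasDerivAt_sin t).const_mul a)
  have h := dist_le_of_approx_trajectories_ODE (v := fun _ q ↦ ((-q.2, q.1) : ℝ × ℝ))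
    (εf := δ * M) (εg := 0) (δ := 0)
    (fun _ ↦ lipschitzWith_rotation) (fun t ht ↦ (hf t ht).continuousWithinAt)
    (fun t ht ↦ (hf t (Ico_subset_Icc_self ht)).mono_of_mem_nhdsWithin (Icc_mem_nhdsGE_of_mem ht))
    (fun t ht ↦ by
      rw [dist_eq_norm]
      exact (hnear _ ((hfM t (Ico_subset_Icc_self ht)).trans hMr)).trans
        (mul_le_mul_of_nonneg_left (hfM t (Ico_subset_Icc_self ht)) hδ))
    (fun t _ ↦ (hcircle t).continuousAt.continuousWithinAt)
    (fun t _ ↦ (hcircle t).hasDerivWithinAt) (fun t _ ↦ by simp)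
    (by simp [hf0]) t ht
  simpa [dist_eq_norm, gronwallBound_of_K_ne_0] using h

theorem exists_isUpperArc (hW : LocallyLipschitz W) (hnear : IsNearRotationOn W δ r)
    (hδ₀ : 0 ≤ δ) (hδ : 8 * 3 ^ 15 * δ ≤ 1) (ha : 0 < a) (har : 3 ^ 10 * a ≤ r) :
    ∃ u τ, IsUpperArc W u τ ∧ u 0 = (a, 0) := by
  obtain ⟨f, hf0, hf⟩ := hnear.exists_solution hW (by linarith) ha.le har
  have hT : 4 * π / 3 < 5 := by linarith [pi_lt_d2]
  have hsub : Icc 0 (4 * π / 3) ⊆ Icc 0 5 := Icc_subset_Icc_right hT.le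
  have hclose t (ht : t ∈ Icc 0 5) : ‖f t - (a * cos t, a * sin t)‖ ≤ a / 8 := by
    have hexp : exp t - 1 ≤ 3 ^ 5 := by
      linarith [(exp_le_exp.2 (by simpa using ht.2)).trans (Real.exp_le_three_pow 5)]
    calc _ ≤ δ * (3 ^ 10 * a) * (exp t - 1) := hnear.norm_sub_circle_le
            (fun t ht ↦ (hf t ht).1) (fun t ht ↦ (hf t ht).2) har hδ₀ hf0 t ht
      _ ≤ δ * (3 ^ 10 * a) * 3 ^ 5 := by gcongr
      _ ≤ a / 8 := by nlinarith
  have hderiv t (ht : t ∈ Ioo 0 5) : HasDerivAt f (W (f t)) t :=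
    (hf t (Ioo_subset_Icc_self ht)).1.hasDerivAt (Icc_mem_nhds ht.1 ht.2)
  have hy' t (ht : t ∈ Icc 0 5) : |(W (f t)).2 - a * cos t| ≤ a / 4 := by
    have h₁ : |(W (f t)).2 - (f t).1| ≤ δ * (3 ^ 10 * a) := by
      simpa using (norm_snd_le _).trans <| (hnear _ ((hf t ht).2.trans har)).trans <|
        mul_le_mul_of_nonneg_left (hf t ht).2 hδ₀
    have h₂ : |(f t).1 - a * cos t| ≤ a / 8 := by simpa using (norm_fst_le _).trans (hclose t ht)
    calc _ ≤ |(W (f t)).2 - (f t).1| + |(f t).1 - a * cos t| := abs_sub_le _ _ _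
      _ ≤ a / 4 := by nlinarith
  obtain ⟨τ, hτ, hτ0, hτ1, hpos⟩ := exists_first_return ha (y' := fun t ↦ (W (f t)).2)
    (fun t ht ↦ (hf t (hsub ht)).1.continuousWithinAt.mono hsub)
    (fun t ht ↦ (hderiv t ⟨ht.1, ht.2.trans hT⟩).snd)
    (fun t ht ↦ hy' t (hsub (Ioo_subset_Icc_self ht)))
    (fun t ht ↦ (hclose t (hsub ht)).trans (by linarith)) (by simp [hf0])
  have hτ5 : Icc 0 τ ⊆ Icc 0 5 := Icc_subset_Icc_right (hτ.2.trans hT).le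
  refine ⟨f, τ, ⟨hτ.1, fun t ht ↦ (hf t (hτ5 ht)).1.continuousWithinAt.mono hτ5,
    fun t ht ↦ hderiv t ⟨ht.1, ht.2.trans (hτ.2.trans hT)⟩, by simp [hf0], by simp [hf0, ha],
    hτ0, hτ1, hpos⟩, hf0⟩

end IsNearRotationOn

/-- If the lower vector field is the reflection–time-reversal of the upper one, i.e.
`Z⁻(x,y) = (−Z⁺₁(x,−y), Z⁺₂(x,−y))`, so that the piecewise system is invariant under
`(x,y,t) ↦ (x,−y,−t)`, then the origin is a crossing center. -/
theorem crossing_center_of_reversibility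
    (Zp : ℝ × ℝ → ℝ × ℝ) (hLip : LocallyLipschitz Zp)
    (hLin : (fun p : ℝ × ℝ => Zp p - (-p.2, p.1)) =o[nhds 0] fun p : ℝ × ℝ => ‖p‖) :
    IsCrossingCenter Zp
      (fun p => (-(Zp (p.1, -p.2)).1, (Zp (p.1, -p.2)).2)) (fun p => p.2) := by
  obtain ⟨r, hr, hnear⟩ := hLin.exists_isNearRotationOn (δ := 1 / (8 * 3 ^ 15)) (by positivity)
  have hδ : 8 * 3 ^ 15 * (1 / (8 * 3 ^ 15) : ℝ) ≤ 1 := by norm_num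
  have hrev (p : ℝ × ℝ) :
      (-(Zp (p.1, -p.2)).1, (Zp (p.1, -p.2)).2) = -flipSnd (Zp (flipSnd p)) := by simp
  refine ⟨r / 3 ^ 10, by positivity, fun p hp hp0 hpr ↦ ?_⟩
  obtain ⟨x, rfl⟩ : ∃ x, p = (x, 0) := ⟨p.1, Prod.ext rfl hp⟩
  have hnorm : ‖((x, 0) : ℝ × ℝ)‖ = |x| := by simp [Prod.norm_def]
  rw [hnorm, abs_pos] at hp0
  have hxr : 3 ^ 10 * |x| ≤ r := by
    rw [hnorm] at hpr
    exact ((lt_div_iff₀' (by positivity)).1 hpr).le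
  obtain hx | hx := hp0.lt_or_gt
  · -- `(x, 0)` ends the time reversal of an upper arc of the field conjugated by `flipFst`
    obtain ⟨w, τ, hw, hw0⟩ := hnear.conj_flipFst.exists_isUpperArc
      (flipFst.lipschitz.locallyLipschitz.comp
        (hLip.comp flipFst.lipschitz.locallyLipschitz)).neg
      (by positivity) hδ (neg_pos.2 hx) (by rwa [abs_of_neg hx] at hxr)
    have hZp : (fun q ↦ -flipFst (-flipFst (Zp (flipFst (flipFst q))))) = Zp := by
      ext <;> simp
    obtain ⟨γ, T, hγ, hrange⟩ := (hZp ▸ hw.reverse).exists_isCrossingPeriodicOrbit hrev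
    exact ⟨γ, T, hγ, hrange ⟨τ, right_mem_Icc.2 hw.pos.le, by simp [hw0]⟩⟩
  · obtain ⟨u, τ, hu, hu0⟩ :=
      hnear.exists_isUpperArc hLip (by positivity) hδ hx (by rwa [abs_of_pos hx] at hxr)
    obtain ⟨γ, T, hγ, hrange⟩ := hu.exists_isCrossingPeriodicOrbit hrev
    exact ⟨γ, T, hγ, hrange ⟨0, left_mem_Icc.2 hu.pos.le, hu0⟩⟩
end

section
/- In the polynomial ring ℝ[l, m₁, m₂, n₁, n₂] (multivariate polynomials over ℝ in five variables), the ideal generated by the three polynomials g₁ = m₁ − m₂, g₂ = m₂(2l + n₁ + n₂) and g₃ = m₂(n₁ − n₂)(6l + 4n₁ + 4n₂ − 1) is a radical ideal. -/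
/-!
With `l, m₁, m₂, n₁, n₂ = X 0, …, X 4`, the affine change of coordinates `a = 2l + n₁ + n₂`,
`u = m₁ − m₂`, `w = m₂`, `b = n₁ − n₂`, `c = 6l + 4n₁ + 4n₂ − 1` turns `g₁, g₂, g₃` into the
squarefree monomials `u`, `wa`, `wbc`, and radicality is invariant under ring automorphisms.
A squarefree monomial ideal is the intersection of the ideals `(X i : i ∈ s)` over the sets `s`
of variables meeting every generator, and each of these is radical: the substitution killing
the variables of `s` has kernel exactly `(X i : i ∈ s)` and takes values in a reduced ring.
-/

open MvPolynomial

theorem Finsupp.sum_single_one_le_iff {σ : Type*} [DecidableEq σ] (t : Finset σ) (m : σ →₀ ℕ) :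
    ∑ i ∈ t, Finsupp.single i 1 ≤ m ↔ ∀ i ∈ t, m i ≠ 0 := by
  simp only [Finsupp.le_def, Finsupp.finsetSum_apply, Finsupp.single_apply, Finset.sum_ite_eq']
  refine ⟨fun h i hi => ?_, fun h i => ?_⟩
  · simpa [hi, Nat.one_le_iff_ne_zero] using h i
  · split_ifs with hi
    · exact Nat.one_le_iff_ne_zero.2 (h i hi)
    · exact Nat.zero_le _

theorem Ideal.IsRadical.map_of_equiv {R S E : Type*} [CommRing R] [CommRing S] [EquivLike E R S]
    [RingEquivClass E R S] (e : E) {I : Ideal R} (hI : I.IsRadical) : (I.map e).IsRadical := by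
  have h : I.map e = I.comap (RingEquivClass.toRingEquiv e).symm :=
    Ideal.map_comap_of_equiv (RingEquivClass.toRingEquiv e)
  rw [h]
  exact hI.comap _

namespace MvPolynomial

variable {σ R : Type*} [CommRing R]

theorem sub_aeval_mem_of_X_sub_mem (J : Ideal (MvPolynomial σ R)) (v : σ → MvPolynomial σ R)
    (hv : ∀ i, X i - v i ∈ J) (p : MvPolynomial σ R) : p - aeval v p ∈ J := by
  induction p using MvPolynomial.induction_on with
  | C a => simp
  | add p q hp hq => simpa [add_sub_add_comm] using J.add_mem hp hq
  | mul_X p i hp =>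
    have h : p * X i - aeval v (p * X i) = (p - aeval v p) * X i + aeval v p * (X i - v i) := by
      rw [map_mul, aeval_X]; ring
    exact h ▸ J.add_mem (J.mul_mem_right _ hp) (J.mul_mem_left _ (hv i))

theorem isRadical_span_X_image [IsReduced R] (s : Set σ) :
    (Ideal.span (X '' s : Set (MvPolynomial σ R))).IsRadical := by
  classical
  rintro p ⟨n, hn⟩
  let v : σ → MvPolynomial σ R := fun i => if i ∈ s then 0 else X i
  have hker : Ideal.span (X '' s) ≤ RingHom.ker (aeval (R := R) v) :=
    Ideal.span_le.2 <| by rintro _ ⟨i, hi, rfl⟩; simp [v, hi]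
  have hp : aeval v p = 0 := eq_zero_of_pow_eq_zero (n := n) (by rw [← map_pow]; exact hker hn)
  have hv (i : σ) : X i - v i ∈ Ideal.span (X '' s) := by
    by_cases hi : i ∈ s
    · simpa [v, hi] using Ideal.subset_span (Set.mem_image_of_mem X hi)
    · simp [v, hi]
  simpa only [hp, sub_zero] using sub_aeval_mem_of_X_sub_mem _ v hv p

theorem prod_X_eq_monomial (t : Finset σ) :
    ∏ i ∈ t, (X i : MvPolynomial σ R) = monomial (∑ i ∈ t, Finsupp.single i 1) 1 := by
  simp [monomial_sum_one, X]

theorem span_prod_X_image_eq_iInf (T : Set (Finset σ)) :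
    Ideal.span ((fun t => ∏ i ∈ t, X i) '' T : Set (MvPolynomial σ R)) =
      ⨅ (s : Set σ) (_ : ∀ t ∈ T, ∃ i ∈ t, i ∈ s), Ideal.span (X '' s) := by
  classical
  refine le_antisymm (le_iInf₂ fun s hs => Ideal.span_le.2 ?_) fun p hp => ?_
  · rintro _ ⟨t, ht, rfl⟩
    obtain ⟨i, hit, his⟩ := hs t ht
    dsimp only
    rw [SetLike.mem_coe, ← Finset.mul_prod_erase t _ hit]
    exact Ideal.mul_mem_right _ _ (Ideal.subset_span (Set.mem_image_of_mem X his))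
  simp_rw [prod_X_eq_monomial]
  rw [← Set.image_image (fun s => monomial s (1 : R)), mem_ideal_span_monomial_image]
  intro m hm
  by_contra! hm_not_le
  -- the variables absent from `m` would meet every generator, yet `p` has the monomial `m`
  have hcover : ∀ t ∈ T, ∃ i ∈ t, i ∈ {i | m i = 0} := by
    intro t ht
    by_contra! h
    exact hm_not_le _ (Set.mem_image_of_mem _ ht) ((Finsupp.sum_single_one_le_iff t m).2 h)
  obtain ⟨i, hi, hmi⟩ :=
    mem_ideal_span_X_image.1 (Ideal.mem_iInf.1 (Ideal.mem_iInf.1 hp _) hcover) m hm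
  exact hmi hi

theorem isRadical_span_prod_X_image [IsReduced R] (T : Set (Finset σ)) :
    (Ideal.span ((fun t => ∏ i ∈ t, X i) '' T : Set (MvPolynomial σ R))).IsRadical := by
  rw [span_prod_X_image_eq_iInf]
  exact Ideal.isRadical_iInf _ fun s => Ideal.isRadical_iInf _ fun _ => isRadical_span_X_image s

end MvPolynomial

noncomputable def lyapunovChart : MvPolynomial (Fin 5) ℝ ≃ₐ[ℝ] MvPolynomial (Fin 5) ℝ :=
  AlgEquiv.ofAlgHom
    (aeval ![2 * X 0 + X 3 + X 4, X 1 - X 2, X 2, X 3 - X 4, 6 * X 0 + 4 * X 3 + 4 * X 4 - 1])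
    (aeval ![(2⁻¹ : ℝ) • (4 * X 0 - X 4 - 1), X 1 + X 2, X 2, (2⁻¹ : ℝ) • (X 3 - 3 * X 0 + X 4 + 1),
      (2⁻¹ : ℝ) • (X 4 + 1 - 3 * X 0 - X 3)])
    -- numerals become `ℕ`-smul so that `module` sees both composites as affine maps
    (algHom_ext fun i => by
      fin_cases i <;> simp [← Nat.ofNat_nsmul_eq_mul, -nsmul_eq_mul] <;> module)
    (algHom_ext fun i => by
      fin_cases i <;> simp [← Nat.ofNat_nsmul_eq_mul, -nsmul_eq_mul] <;> module)

/-- In `ℝ[l, m₁, m₂, n₁, n₂]` (with `l = X 0`, `m₁ = X 1`, `m₂ = X 2`, `n₁ = X 3`,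
`n₂ = X 4`), the ideal generated by the Lyapunov quantities
`g₁ = m₁ − m₂`, `g₂ = m₂(2l + n₁ + n₂)` and `g₃ = m₂(n₁ − n₂)(6l + 4n₁ + 4n₂ − 1)`
is radical. -/
theorem lyapunov_ideal_is_radical :
    (Ideal.span
      {(X 1 - X 2 : MvPolynomial (Fin 5) ℝ),
       X 2 * (2 * X 0 + X 3 + X 4),
       X 2 * (X 3 - X 4) * (6 * X 0 + 4 * X 3 + 4 * X 4 - 1)}).IsRadical := by
  have hgens : lyapunovChart '' ((fun t => ∏ i ∈ t, X i) '' {{1}, {2, 0}, {2, 3, 4}}) =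
      {X 1 - X 2, X 2 * (2 * X 0 + X 3 + X 4),
        X 2 * (X 3 - X 4) * (6 * X 0 + 4 * X 3 + 4 * X 4 - 1)} := by
    simp [Set.image_insert_eq, lyapunovChart, ← mul_assoc]
  rw [← hgens, ← Ideal.map_span]
  exact (isRadical_span_prod_X_image _).map_of_equiv _
end

section
/- For real numbers l, m₁, m₂, n₁, n₂, the three equations m₁ − m₂ = 0, m₂(2l + n₁ + n₂) = 0 and m₂(n₁ − n₂)(6l + 4n₁ + 4n₂ − 1) = 0 hold simultaneously if and only if one of the following holds: (i) m₁ = m₂ = 0; (ii) m₁ = m₂, n₁ = −l and n₂ = −l; (iii) 2l + 1 = 0, m₁ = m₂ and n₁ + n₂ = 1. -/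
/-!
The first quantity forces `m₁ = m₂`, and `m₂` is a common factor of the other two. Once it is
cancelled, `W₃` fixes `n₁ + n₂ = -2l`, on which the last factor of `W₄` equals `-(2l + 1)`; so `W₄`
vanishes exactly when `n₁ = n₂` (hence both equal `-l`) or `2l + 1 = 0`.
-/

theorem mul_eq_zero_and_mul_mul_eq_zero_iff {M₀ : Type*} [MulZeroClass M₀] [NoZeroDivisors M₀]
    {a b c d : M₀} : a * b = 0 ∧ a * c * d = 0 ↔ a = 0 ∨ b = 0 ∧ c * d = 0 := by
  simp only [mul_eq_zero]
  tauto

/-- The vanishing of `W₃` and `W₄` after the common factor `m₂` is cancelled. -/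
theorem reduced_lyapunov_quantities_vanish_iff {R : Type*} [CommRing R] [NoZeroDivisors R]
    [NeZero (2 : R)] {l n₁ n₂ : R} :
    (2 * l + n₁ + n₂ = 0 ∧ (n₁ - n₂) * (6 * l + 4 * n₁ + 4 * n₂ - 1) = 0) ↔
      (n₁ = -l ∧ n₂ = -l) ∨ (2 * l + 1 = 0 ∧ n₁ + n₂ = 1) := by
  constructor
  · rintro ⟨hsum, hprod⟩
    have hfactor : 6 * l + 4 * n₁ + 4 * n₂ - 1 = -(2 * l + 1) := by
      linear_combination 4 * hsum
    rw [hfactor, mul_neg, neg_eq_zero] at hprod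
    rcases mul_eq_zero.1 hprod with hn | hl
    · have htwice : (2 : R) * (n₁ + l) = 0 := by linear_combination hsum + hn
      have hn₁ : n₁ = -l :=
        eq_neg_of_add_eq_zero_left ((mul_eq_zero.1 htwice).resolve_left two_ne_zero)
      exact Or.inl ⟨hn₁, by linear_combination hn₁ - hn⟩
    · exact Or.inr ⟨hl, by linear_combination hsum - hl⟩
  · rintro (⟨rfl, rfl⟩ | ⟨hl, hn⟩)
    · constructor <;> ring
    · exact ⟨by linear_combination hl + hn, by linear_combination (n₁ - n₂) * (3 * hl + 4 * hn)⟩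

/-- The common vanishing of the Lyapunov quantities `W₂, W₃, W₄` of the continuous
horizontal family characterizes the three center conditions. -/
theorem lyapunov_vanishing_characterization_continuous (l m₁ m₂ n₁ n₂ : ℝ) :
    (m₁ - m₂ = 0 ∧ m₂ * (2 * l + n₁ + n₂) = 0 ∧
      m₂ * (n₁ - n₂) * (6 * l + 4 * n₁ + 4 * n₂ - 1) = 0) ↔
      (m₁ = 0 ∧ m₂ = 0) ∨
      (m₁ = m₂ ∧ n₁ = -l ∧ n₂ = -l) ∨
      (2 * l + 1 = 0 ∧ m₁ = m₂ ∧ n₁ + n₂ = 1) := by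
  rw [sub_eq_zero, mul_eq_zero_and_mul_mul_eq_zero_iff, reduced_lyapunov_quantities_vanish_iff]
  constructor
  · rintro ⟨rfl, hm | hn | hl⟩
    exacts [Or.inl ⟨hm, hm⟩, Or.inr (Or.inl ⟨rfl, hn⟩), Or.inr (Or.inr ⟨hl.1, rfl, hl.2⟩)]
  · rintro (⟨rfl, rfl⟩ | ⟨rfl, hn⟩ | ⟨hl, rfl, hn⟩)
    exacts [⟨rfl, Or.inl rfl⟩, ⟨rfl, Or.inr (Or.inl hn)⟩, ⟨rfl, Or.inr (Or.inr ⟨hl, hn⟩)⟩]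
end

section
/- For real numbers l₁, l₂, m₁, m₂, n₁, n₂, the five equations m₁ − m₂ = 0, m₂(l₁ + l₂ + n₁ + n₂) = 0, m₂(l₁ + l₂ + 1)(3l₁ + l₂ + 4n₂) = 0, m₂(l₁ + l₂ + 1)(l₁ − l₂)² = 0 and m₂(l₂ + 2)(l₂ − 1)(l₁ + l₂ + 1)(l₁ − l₂) = 0 hold simultaneously if and only if one of the following holds: (i) m₁ = m₂ = 0; (ii) l₁ = l₂, m₁ = m₂, n₁ = −l₁ and n₂ = −l₁; (iii) l₁ + l₂ + 1 = 0, m₁ = m₂ and n₁ + n₂ = 1. -/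
/-!
Once `W₂` gives `m₁ = m₂` and the common factor `m₂` is cancelled, `W₃` is the linear condition
`l₁ + l₂ + n₁ + n₂ = 0` and `W₄, W₅, W₆` are multiples of `l₁ + l₂ + 1`. Either this factor
vanishes, leaving only `W₃`, or `W₅` forces `l₁ = l₂` (so `W₆` vanishes too) and `W₃, W₄`
become a regular linear system in `n₁, n₂` with solution `n₁ = n₂ = -l₁`.
-/

theorem reduced_lyapunov_system_iff (l₁ l₂ n₁ n₂ : ℝ) :
    (l₁ + l₂ + n₁ + n₂ = 0 ∧
      (l₁ + l₂ + 1) * (3 * l₁ + l₂ + 4 * n₂) = 0 ∧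
      (l₁ + l₂ + 1) * (l₁ - l₂) ^ 2 = 0 ∧
      (l₂ + 2) * (l₂ - 1) * (l₁ + l₂ + 1) * (l₁ - l₂) = 0) ↔
      (l₁ = l₂ ∧ n₁ = -l₁ ∧ n₂ = -l₁) ∨ (l₁ + l₂ + 1 = 0 ∧ n₁ + n₂ = 1) := by
  by_cases hs : l₁ + l₂ + 1 = 0
  · simp only [hs, zero_mul, mul_zero, true_and, and_true]
    constructor
    · intro hW₂
      right
      linarith
    · rintro (⟨hl, hn₁, hn₂⟩ | hn) <;> linarith
  · simp only [mul_eq_zero, hs, pow_eq_zero_iff two_ne_zero, sub_eq_zero, false_or, false_and,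
      or_false]
    constructor
    · rintro ⟨hW₂, hW₄, hl, -⟩
      exact ⟨hl, by linarith, by linarith⟩
    · rintro ⟨hl, hn₁, hn₂⟩
      exact ⟨by linarith, by linarith, hl, Or.inr hl⟩

/-- The common vanishing of the Lyapunov quantities `W₂, …, W₆` of the discontinuous
horizontal family characterizes the three center conditions. -/
theorem lyapunov_vanishing_characterization_discontinuous (l₁ l₂ m₁ m₂ n₁ n₂ : ℝ) :
    (m₁ - m₂ = 0 ∧
      m₂ * (l₁ + l₂ + n₁ + n₂) = 0 ∧
      m₂ * (l₁ + l₂ + 1) * (3 * l₁ + l₂ + 4 * n₂) = 0 ∧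
      m₂ * (l₁ + l₂ + 1) * (l₁ - l₂) ^ 2 = 0 ∧
      m₂ * (l₂ + 2) * (l₂ - 1) * (l₁ + l₂ + 1) * (l₁ - l₂) = 0) ↔
      (m₁ = 0 ∧ m₂ = 0) ∨
      (l₁ = l₂ ∧ m₁ = m₂ ∧ n₁ = -l₁ ∧ n₂ = -l₁) ∨
      (l₁ + l₂ + 1 = 0 ∧ m₁ = m₂ ∧ n₁ + n₂ = 1) := by
  by_cases hm₂ : m₂ = 0
  · subst hm₂
    simp only [sub_zero, zero_mul, and_true]
    tauto
  · have reduced := reduced_lyapunov_system_iff l₁ l₂ n₁ n₂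
    simp only [mul_assoc] at reduced ⊢
    simp only [sub_eq_zero, mul_eq_zero_iff_left hm₂, reduced, hm₂, and_false, false_or]
    tauto
end
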